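/- arXiv:math/0308001 — 2 statements merged into one kernel-verified Lean document; each statement's English description precedes it below -/
import Mathlib

section
/- If two reals t₁, t₂ satisfy n^{it₁} = n^{it₂} for every natural number n ≥ 2, then t₁ = t₂. -/
open Complex in
lemma aux_exists_int (t₁ t₂ : ℝ) (n : ℕ) (hn : 2 ≤ n)
    (h : (n : ℂ) ^ ((t₁ : ℂ) * Complex.I) = (n : ℂ) ^ ((t₂ : ℂ) * Complex.I)) :
    ∃ k : ℤ, (t₁ - t₂) * Real.log n = k * (2 * Real.pi) := by
  have hn0 : (n : ℂ) ≠ 0 := Nat.cast_ne_zero.mpr (by omega)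
  rw [Complex.cpow_def_of_ne_zero hn0, Complex.cpow_def_of_ne_zero hn0,
    Complex.exp_eq_exp_iff_exists_int] at h
  obtain ⟨k, hk⟩ := h
  refine ⟨k, ?_⟩
  have hlog : Complex.log (n : ℂ) = (Real.log n : ℂ) := by
    rw [← Complex.ofReal_natCast, Complex.ofReal_log (by positivity)]
  rw [hlog] at hk
  have := congrArg Complex.im hk
  simp only [Complex.add_im, Complex.mul_im, Complex.mul_re, Complex.ofReal_re,
    Complex.ofReal_im, Complex.I_re, Complex.I_im, Complex.intCast_re, Complex.intCast_im,
    Complex.mul_im, Complex.ofReal_mul, Complex.re_ofNat, Complex.im_ofNat] at this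
  ring_nf at this ⊢
  linarith

theorem stmt3 (t₁ t₂ : ℝ)
    (h : ∀ n : ℕ, 2 ≤ n →
      (n : ℂ) ^ ((t₁ : ℂ) * Complex.I) = (n : ℂ) ^ ((t₂ : ℂ) * Complex.I)) :
    t₁ = t₂ := by
  by_contra hne
  have hd : t₁ - t₂ ≠ 0 := sub_ne_zero.mpr hne
  obtain ⟨a, ha⟩ := aux_exists_int t₁ t₂ 2 le_rfl (h 2 le_rfl)
  obtain ⟨b, hb⟩ := aux_exists_int t₁ t₂ 3 (by norm_num) (h 3 (by norm_num))
  have hpi : (0:ℝ) < Real.pi := Real.pi_pos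
  have hlog2 : (0:ℝ) < Real.log 2 := Real.log_pos (by norm_num)
  have hlog3 : (0:ℝ) < Real.log 3 := Real.log_pos (by norm_num)
  push_cast at ha hb
  have ha0 : a ≠ 0 := by
    rintro rfl
    rw [Int.cast_zero, zero_mul] at ha
    exact mul_ne_zero hd hlog2.ne' ha
  -- a * log 3 = b * log 2
  have key : (a : ℝ) * Real.log 3 = (b : ℝ) * Real.log 2 := by
    have h1 : ((t₁ - t₂) * Real.log 2) * Real.log 3 = ((t₁ - t₂) * Real.log 3) * Real.log 2 := by
      ring
    rw [ha, hb] at h1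
    have h2π : (2 * Real.pi) ≠ 0 := by positivity
    apply mul_left_cancel₀ h2π
    linear_combination h1
  -- so (3:ℝ)^a = (2:ℝ)^b as zpow
  have hzpow : (3:ℝ) ^ (a:ℤ) = (2:ℝ) ^ (b:ℤ) := by
    have := Real.exp_log (x := (3:ℝ)) (by norm_num)
    apply Real.log_injOn_pos (by simp [Set.mem_Ioi]; positivity) (by simp [Set.mem_Ioi]; positivity)
    rw [Real.log_zpow, Real.log_zpow]
    exact key
  -- contradiction
  rcases lt_trichotomy a 0 with haneg | rfl | hapos
  · have h3 : (3:ℝ) ^ (-a : ℤ) = (2:ℝ) ^ (-b : ℤ) := by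
      rw [zpow_neg, zpow_neg, hzpow]
    have hbneg : b < 0 := by
      by_contra hb'
      push_neg at hb'
      have h1 : (3:ℝ) ^ (a:ℤ) < 1 := zpow_lt_one_of_neg₀ (by norm_num) haneg
      have h2 : (1:ℝ) ≤ (2:ℝ) ^ (b:ℤ) := one_le_zpow₀ (by norm_num) hb'
      linarith [hzpow]
    have : ((3:ℕ):ℝ) ^ (-a).toNat = ((2:ℕ):ℝ) ^ (-b).toNat := by
      rw [← zpow_natCast, ← zpow_natCast, Int.toNat_of_nonneg (by omega),
        Int.toNat_of_nonneg (by omega)]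
      push_cast
      exact h3
    have hnat : (3:ℕ) ^ (-a).toNat = (2:ℕ) ^ (-b).toNat := by
      exact_mod_cast this
    have h3dvd : (3:ℕ) ∣ 2 ^ (-b).toNat := by
      rw [← hnat]
      exact dvd_pow_self 3 (by omega)
    have := (Nat.prime_three).dvd_of_dvd_pow h3dvd
    norm_num at this
  · exact ha0 rfl
  · have hbpos : 0 < b := by
      by_contra hb'
      push_neg at hb'
      have h1 : (1:ℝ) < (3:ℝ) ^ (a:ℤ) := one_lt_zpow₀ (by norm_num) (by omega)
      have h2 : (2:ℝ) ^ (b:ℤ) ≤ 1 := zpow_le_one_of_nonpos₀ (by norm_num) hb'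
      linarith [hzpow]
    have : ((3:ℕ):ℝ) ^ a.toNat = ((2:ℕ):ℝ) ^ b.toNat := by
      rw [← zpow_natCast, ← zpow_natCast, Int.toNat_of_nonneg (by omega),
        Int.toNat_of_nonneg (by omega)]
      push_cast
      exact hzpow
    have hnat : (3:ℕ) ^ a.toNat = (2:ℕ) ^ b.toNat := by exact_mod_cast this
    have h3dvd : (3:ℕ) ∣ 2 ^ b.toNat := by
      rw [← hnat]
      exact dvd_pow_self 3 (by omega)
    have := (Nat.prime_three).dvd_of_dvd_pow h3dvd
    norm_num at this
end

section
/- For any nonzero real t, the sequence of partial sums S_N = ∑_{n=1}^N cos(4t ln n) does not converge (i.e., the series ∑ cos(4t ln n) diverges). -/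
open Filter

theorem stmt7 (t : ℝ) (ht : t ≠ 0) :
    ¬ ∃ L : ℝ, Tendsto (fun N : ℕ => ∑ n ∈ Finset.Icc 1 N, Real.cos (4 * t * Real.log n))
      atTop (nhds L) := by
  rintro ⟨L, hL⟩
  -- terms tend to 0
  have key : Tendsto (fun N : ℕ => Real.cos (4 * t * Real.log (N + 1))) atTop (nhds 0) := by
    have h1 : Tendsto (fun N : ℕ =>
        (∑ n ∈ Finset.Icc 1 (N + 1), Real.cos (4 * t * Real.log n))
        - ∑ n ∈ Finset.Icc 1 N, Real.cos (4 * t * Real.log n)) atTop (nhds (L - L)) :=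
      (hL.comp (tendsto_add_atTop_nat 1)).sub hL
    rw [sub_self] at h1
    refine h1.congr fun N => ?_
    rw [Finset.sum_Icc_succ_top (Nat.le_add_left 1 N)]
    push_cast
    ring
  have hφ : Tendsto (fun N : ℕ => N ^ 2 + 2 * N) atTop atTop :=
    tendsto_atTop_mono (fun n => (Nat.le_mul_of_pos_left n two_pos).trans (Nat.le_add_left _ _)) tendsto_id
  have h2 : Tendsto (fun N : ℕ => Real.cos (4 * t * Real.log ((N ^ 2 + 2 * N : ℕ) + 1)))
      atTop (nhds 0) := key.comp hφ
  have h3 : Tendsto (fun N : ℕ => Real.cos (4 * t * Real.log ((N ^ 2 + 2 * N : ℕ) + 1)))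
      atTop (nhds (2 * 0 ^ 2 - 1)) := by
    have := ((key.pow 2).const_mul 2).sub tendsto_const_nhds (b := (1 : ℝ))
    refine this.congr fun N => ?_
    have hcast : (((N ^ 2 + 2 * N : ℕ) : ℝ) + 1) = ((N : ℝ) + 1) ^ 2 := by
      push_cast; ring
    rw [hcast, Real.log_pow]
    push_cast
    rw [show 4 * t * (2 * Real.log ((N : ℝ) + 1)) = 2 * (4 * t * Real.log ((N : ℝ) + 1)) by ring,
      Real.cos_two_mul]
  have := tendsto_nhds_unique h2 h3
  norm_num at this
end
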